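/- For every real number z > 0 that is not an integer, with n = ⌊z⌋, one has ∫₀^∞ (e^{−x} − e_{n−1}(−x)) · x^{−z} dx = Γ(1 − z), where Γ(1 − z) denotes the value at 1 − z of the Gamma function analytically continued to negative non-integer arguments. -/

import Mathlib

open MeasureTheory Real Filter Set

/-- Truncated exponential polynomial `e_n(x) = ∑_{k=0}^{n} x^k / k!`.
Note that `e_{n-1}(x)` corresponds to `∑ k in Finset.range n, x^k / k!`. -/
noncomputable def truncExpPrev (n : ℕ) (x : ℝ) : ℝ :=
  ∑ k ∈ Finset.range n, x ^ k / (k.factorial : ℝ)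

/-!
Write `R n x = e^{-x} - e_{n-1}(-x)` (`expNegRemainder n x`). Then `R (n+1)' = -R n` and
`R (n+1) 0 = 0`, so the mean value theorem gives inductively `|R n x| ≤ x ^ n` and
`|R (n+1) x| ≤ x ^ n` for `x ≥ 0`. For `n < w < n + 1` these bounds make `R n x * x ^ (-w)`
integrable on `(0, ∞)` and make the boundary terms vanish when `R (n+1) x * x ^ (-w)` is
integrated by parts against `x ^ (1 - w)`. This yields
`(1 - w) ∫ R (n+1) x * x ^ (-w) = ∫ R n x * x ^ (-(w - 1))`, the recursion `Γ(s + 1) = s Γ(s)`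
at `s = 1 - w`; induction on `n`, starting from Euler's integral for `n = 0`, finishes the proof.
-/

open Topology

noncomputable def expNegRemainder (n : ℕ) (x : ℝ) : ℝ :=
  exp (-x) - truncExpPrev n (-x)

@[simp]
lemma expNegRemainder_zero (x : ℝ) : expNegRemainder 0 x = exp (-x) := by
  simp [expNegRemainder, truncExpPrev]

@[simp]
lemma expNegRemainder_succ_zero (n : ℕ) : expNegRemainder (n + 1) 0 = 0 := by
  simp [expNegRemainder, truncExpPrev, Finset.sum_range_succ']

lemma continuous_expNegRemainder (n : ℕ) : Continuous (expNegRemainder n) := by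
  unfold expNegRemainder truncExpPrev
  fun_prop

lemma truncExpPrev_succ (n : ℕ) (x : ℝ) :
    truncExpPrev (n + 1) x = truncExpPrev n x + x ^ n / n.factorial :=
  Finset.sum_range_succ _ _

lemma hasDerivAt_truncExpPrev_succ (n : ℕ) (x : ℝ) :
    HasDerivAt (truncExpPrev (n + 1)) (truncExpPrev n x) x := by
  induction n with
  | zero =>
    have hone : truncExpPrev 1 = fun _ => 1 := funext fun _ => by simp [truncExpPrev]
    simpa [hone, truncExpPrev] using hasDerivAt_const x (1 : ℝ)
  | succ n ih =>
    have hpow := (hasDerivAt_pow (n + 1) x).div_const ((n + 1).factorial : ℝ)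
    rw [show truncExpPrev (n + 2)
        = fun y => truncExpPrev (n + 1) y + y ^ (n + 1) / (n + 1).factorial
      from funext (truncExpPrev_succ (n + 1))]
    refine (ih.add hpow).congr_deriv ?_
    rw [truncExpPrev_succ, Nat.factorial_succ]
    push_cast
    field_simp

lemma hasDerivAt_expNegRemainder_succ (n : ℕ) (x : ℝ) :
    HasDerivAt (expNegRemainder (n + 1)) (-expNegRemainder n x) x := by
  have hexp := (hasDerivAt_neg x).exp
  have htrunc := (hasDerivAt_truncExpPrev_succ n (-x)).comp x (hasDerivAt_neg x)
  refine (hexp.sub htrunc).congr_deriv ?_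
  simp only [expNegRemainder]
  ring

lemma abs_expNegRemainder_succ_le_of_le {n k : ℕ}
    (h : ∀ y, 0 ≤ y → |expNegRemainder n y| ≤ y ^ k) {x : ℝ} (hx : 0 ≤ x) :
    |expNegRemainder (n + 1) x| ≤ x ^ (k + 1) := by
  have hmvt := norm_image_sub_le_of_norm_deriv_le_segment' (C := x ^ k)
    (fun y _ => (hasDerivAt_expNegRemainder_succ n y).hasDerivWithinAt)
    (fun y hy => by
      rw [norm_neg, Real.norm_eq_abs]
      exact (h y hy.1).trans (pow_le_pow_left₀ hy.1 hy.2.le k))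
    x ⟨hx, le_rfl⟩
  simpa [pow_succ] using hmvt

lemma abs_expNegRemainder_le_pow (n : ℕ) {x : ℝ} (hx : 0 ≤ x) :
    |expNegRemainder n x| ≤ x ^ n := by
  induction n generalizing x with
  | zero => simpa [abs_of_pos (exp_pos _)] using hx
  | succ n ih => exact abs_expNegRemainder_succ_le_of_le (fun y hy => ih hy) hx

lemma abs_expNegRemainder_succ_le_pow (n : ℕ) {x : ℝ} (hx : 0 ≤ x) :
    |expNegRemainder (n + 1) x| ≤ x ^ n := by
  induction n generalizing x with
  | zero =>
    have hle : exp (-x) ≤ 1 := exp_le_one_iff.mpr (by linarith)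
    have hpos := exp_pos (-x)
    have habs : |exp (-x) - 1| ≤ 1 := abs_sub_le_iff.mpr ⟨by linarith, by linarith⟩
    simpa [expNegRemainder, truncExpPrev] using habs
  | succ n ih => exact abs_expNegRemainder_succ_le_of_le (fun y hy => ih hy) hx

lemma abs_mul_rpow_le_rpow_add {a x : ℝ} {k : ℕ} (hx : 0 < x) (ha : |a| ≤ x ^ k) (p : ℝ) :
    |a * x ^ p| ≤ x ^ ((k : ℝ) + p) := by
  rw [abs_mul, abs_of_pos (rpow_pos_of_pos hx p), rpow_add hx, rpow_natCast]
  exact mul_le_mul_of_nonneg_right ha (rpow_nonneg hx.le p)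

lemma continuousOn_mul_rpow {f : ℝ → ℝ} (hf : Continuous f) (p : ℝ) :
    ContinuousOn (fun x => f x * x ^ p) (Ioi 0) :=
  hf.continuousOn.mul (continuousOn_id.rpow_const fun _ hx => Or.inl (ne_of_gt hx))

lemma integrableOn_Ioi_zero_of_abs_le_rpow {f : ℝ → ℝ} {a b : ℝ}
    (hf : ContinuousOn f (Ioi 0)) (ha : -1 < a) (hb : b < -1)
    (h_zero : ∀ x ∈ Ioc 0 1, |f x| ≤ x ^ a) (h_top : ∀ x ∈ Ioi 1, |f x| ≤ x ^ b) :
    IntegrableOn f (Ioi 0) := by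
  rw [← Ioc_union_Ioi_eq_Ioi zero_le_one]
  refine IntegrableOn.union ?_ ?_
  · have hint : IntegrableOn (fun x : ℝ => x ^ a) (Ioc 0 1) :=
      (intervalIntegrable_iff_integrableOn_Ioc_of_le zero_le_one).mp
        (intervalIntegral.intervalIntegrable_rpow' ha)
    refine hint.mono' ((hf.mono Ioc_subset_Ioi_self).aestronglyMeasurable measurableSet_Ioc) ?_
    filter_upwards [ae_restrict_mem measurableSet_Ioc] with x hx
    exact h_zero x hx
  · refine (integrableOn_Ioi_rpow_of_lt hb zero_lt_one).mono'
      ((hf.mono (Ioi_subset_Ioi zero_le_one)).aestronglyMeasurable measurableSet_Ioi) ?_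
    filter_upwards [ae_restrict_mem measurableSet_Ioi] with x hx
    exact h_top x hx

lemma integrableOn_expNegRemainder_mul_rpow {m : ℕ} {w : ℝ} (hmw : m < w) (hwm : w < m + 1) :
    IntegrableOn (fun x => expNegRemainder m x * x ^ (-w)) (Ioi 0) := by
  cases m with
  | zero =>
    have hGamma := GammaIntegral_convergent (s := 1 - w) (by simpa using hwm)
    simpa using hGamma
  | succ n =>
    push_cast at hmw hwm
    refine integrableOn_Ioi_zero_of_abs_le_rpow (a := (n + 1 : ℕ) + -w) (b := n + -w)
      (continuousOn_mul_rpow (continuous_expNegRemainder _) _) (by push_cast; linarith)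
      (by linarith) (fun x hx => ?_) (fun x hx => ?_)
    · exact abs_mul_rpow_le_rpow_add hx.1 (abs_expNegRemainder_le_pow _ hx.1.le) _
    · have hx0 : (0 : ℝ) < x := zero_lt_one.trans hx
      exact abs_mul_rpow_le_rpow_add hx0 (abs_expNegRemainder_succ_le_pow _ hx0.le) _

lemma tendsto_nhdsGT_zero_of_abs_le_rpow {f : ℝ → ℝ} {a : ℝ} (ha : 0 < a)
    (h : ∀ x > 0, |f x| ≤ x ^ a) : Tendsto f (𝓝[>] 0) (𝓝 0) := by
  have hrpow : Tendsto (fun x : ℝ => x ^ a) (𝓝[>] 0) (𝓝 0) := by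
    simpa [zero_rpow ha.ne'] using
      ((continuousAt_rpow_const 0 a (Or.inr ha.le)).tendsto).mono_left nhdsWithin_le_nhds
  exact squeeze_zero_norm' (eventually_nhdsWithin_of_forall h) hrpow

lemma tendsto_atTop_zero_of_abs_le_rpow {f : ℝ → ℝ} {b : ℝ} (hb : b < 0)
    (h : ∀ x > 0, |f x| ≤ x ^ b) : Tendsto f atTop (𝓝 0) := by
  have hrpow : Tendsto (fun x : ℝ => x ^ b) atTop (𝓝 0) := by
    simpa using tendsto_rpow_neg_atTop (neg_pos.mpr hb)
  exact squeeze_zero_norm' ((eventually_gt_atTop 0).mono h) hrpow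

lemma one_sub_mul_integral_expNegRemainder_succ_mul_rpow {n : ℕ} {w : ℝ}
    (hnw : n + 1 < w) (hwn : w < n + 2) :
    (1 - w) * ∫ x in Ioi 0, expNegRemainder (n + 1) x * x ^ (-w)
      = ∫ x in Ioi 0, expNegRemainder n x * x ^ (1 - w) := by
  have hu (x : ℝ) (_ : x ∈ Ioi 0) :
      HasDerivAt (expNegRemainder (n + 1)) (-expNegRemainder n x) x :=
    hasDerivAt_expNegRemainder_succ n x
  have hv (x : ℝ) (hx : x ∈ Ioi 0) :
      HasDerivAt (fun y => y ^ (1 - w)) ((1 - w) * x ^ (-w)) x := by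
    simpa using hasDerivAt_rpow_const (p := 1 - w) (Or.inl (ne_of_gt hx))
  have huv' :
      IntegrableOn (fun x => expNegRemainder (n + 1) x * ((1 - w) * x ^ (-w))) (Ioi 0) := by
    have h := (integrableOn_expNegRemainder_mul_rpow (m := n + 1) (by push_cast; linarith)
      (by push_cast; linarith)).const_mul (1 - w)
    simp only [mul_left_comm (1 - w)] at h
    exact h
  have hu'v : IntegrableOn (fun x => -expNegRemainder n x * x ^ (1 - w)) (Ioi 0) := by
    simpa only [neg_mul, neg_sub] using
      (integrableOn_expNegRemainder_mul_rpow (m := n) (w := w - 1) (by linarith)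
        (by linarith)).fun_neg
  have h_zero : Tendsto (fun x => expNegRemainder (n + 1) x * x ^ (1 - w)) (𝓝[>] 0) (𝓝 0) :=
    tendsto_nhdsGT_zero_of_abs_le_rpow (a := (n + 1 : ℕ) + (1 - w)) (by push_cast; linarith)
      fun x hx => abs_mul_rpow_le_rpow_add hx (abs_expNegRemainder_le_pow _ hx.le) _
  have h_top : Tendsto (fun x => expNegRemainder (n + 1) x * x ^ (1 - w)) atTop (𝓝 0) :=
    tendsto_atTop_zero_of_abs_le_rpow (b := n + (1 - w)) (by linarith)
      fun x hx => abs_mul_rpow_le_rpow_add hx (abs_expNegRemainder_succ_le_pow _ hx.le) _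
  have hparts := integral_Ioi_mul_deriv_eq_deriv_mul hu hv huv' hu'v h_zero h_top
  simp only [mul_left_comm _ (1 - w), integral_const_mul, neg_mul, integral_neg] at hparts
  linarith

lemma integral_expNegRemainder_mul_rpow (m : ℕ) {w : ℝ} (hmw : m < w) (hwm : w < m + 1) :
    ∫ x in Ioi 0, expNegRemainder m x * x ^ (-w) = Gamma (1 - w) := by
  induction m generalizing w with
  | zero =>
    rw [Gamma_eq_integral (by simpa using hwm)]
    simp
  | succ n ih =>
    push_cast at hmw hwm
    have hw : 1 - w ≠ 0 := by linarith
    have hprev := ih (w := w - 1) (by linarith) (by linarith)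
    rw [neg_sub, show 1 - (w - 1) = (1 - w) + 1 by ring, Gamma_add_one hw] at hprev
    rw [← one_sub_mul_integral_expNegRemainder_succ_mul_rpow (by linarith) (by linarith)]
      at hprev
    exact mul_left_cancel₀ hw hprev

/-- For non-integer `z > 0` with `n = ⌊z⌋`,
`∫₀^∞ (e^{-x} - e_{n-1}(-x)) x^{-z} dx = Γ(1 - z)`. -/
theorem regularized_integral_eq_Gamma_one_sub (z : ℝ) (hz : 0 < z)
    (hnint : ∀ m : ℤ, z ≠ (m : ℝ)) :
    ∫ x in Set.Ioi (0 : ℝ), (Real.exp (-x) - truncExpPrev ⌊z⌋₊ (-x)) * x ^ (-z)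
      = Real.Gamma (1 - z) := by
  have hfloor_lt : (⌊z⌋₊ : ℝ) < z :=
    (Nat.floor_le hz.le).lt_of_ne fun h => hnint ⌊z⌋₊ (by exact_mod_cast h.symm)
  exact integral_expNegRemainder_mul_rpow ⌊z⌋₊ hfloor_lt (Nat.lt_floor_add_one z)
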